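/- arXiv:1602.04279 — 4 statements merged into one kernel-verified Lean document; each statement's English description precedes it below -/
import Mathlib

section
/- Let μ > 0, α > 0 and let f solve f'' μ + f' + α f = 0 in the sense f'(t)=g(t), μ g'(t) = -α f(t) - g(t), with f(0)=0, g(0)=1. Then there exists a universal constant c > 0 (independent of μ, α, t) such that ∫₀ᵗ f(s)² ds ≤ c·μ²/α for all t ≥ 0. -/
/-!
The energy `α f² + μ g²` decreases at rate `2 g²` and the cross term `μ f g + f² / 2` has
derivative `μ g² - α f²`. Integrating both from `0` gives the exact identity
`2 α ∫₀ᵗ f² = μ² - μ α f(t)² - (μ g(t) + f(t))²`, so `∫₀ᵗ f² ≤ μ² / (2 α)`.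
-/

open intervalIntegral

section DampedOscillator

variable {μ α : ℝ} {f g : ℝ → ℝ}

theorem hasDerivAt_damped_energy (hμ : μ ≠ 0) {s : ℝ} (hf : HasDerivAt f (g s) s)
    (hg : HasDerivAt g ((-α * f s - g s) / μ) s) :
    HasDerivAt (fun u => α * f u ^ 2 + μ * g u ^ 2) (-2 * g s ^ 2) s := by
  refine (((hf.pow 2).const_mul α).add ((hg.pow 2).const_mul μ)).congr_deriv ?_
  field_simp
  ring

theorem hasDerivAt_damped_crossTerm (hμ : μ ≠ 0) {s : ℝ} (hf : HasDerivAt f (g s) s)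
    (hg : HasDerivAt g ((-α * f s - g s) / μ) s) :
    HasDerivAt (fun u => μ * f u * g u + f u ^ 2 / 2) (μ * g s ^ 2 - α * f s ^ 2) s := by
  refine (((hf.const_mul μ).mul hg).add ((hf.pow 2).div_const 2)).congr_deriv ?_
  field_simp
  ring

variable (hμ : μ ≠ 0) (hf : ∀ t, HasDerivAt f (g t) t)
  (hg : ∀ t, HasDerivAt g ((-α * f t - g t) / μ) t)
include hμ hf hg

theorem two_mul_integral_sq_deriv_eq (a b : ℝ) :
    2 * ∫ s in a..b, g s ^ 2 =
      (α * f a ^ 2 + μ * g a ^ 2) - (α * f b ^ 2 + μ * g b ^ 2) := by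
  have hgc : Continuous g := continuous_iff_continuousAt.2 fun t => (hg t).continuousAt
  have h := integral_eq_sub_of_hasDerivAt (fun s _ => hasDerivAt_damped_energy hμ (hf s) (hg s))
    ((continuous_const.mul (hgc.pow 2)).intervalIntegrable a b)
  rw [integral_const_mul] at h
  linarith

theorem mul_integral_sq_eq (a b : ℝ) :
    α * ∫ s in a..b, f s ^ 2 =
      μ * (∫ s in a..b, g s ^ 2)
        - ((μ * f b * g b + f b ^ 2 / 2) - (μ * f a * g a + f a ^ 2 / 2)) := by
  have hfc : Continuous f := continuous_iff_continuousAt.2 fun t => (hf t).continuousAt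
  have hgc : Continuous g := continuous_iff_continuousAt.2 fun t => (hg t).continuousAt
  have h := integral_eq_sub_of_hasDerivAt
    (fun s _ => hasDerivAt_damped_crossTerm hμ (hf s) (hg s))
    (((continuous_const.mul (hgc.pow 2)).sub
      (continuous_const.mul (hfc.pow 2))).intervalIntegrable a b)
  have hgint : IntervalIntegrable (fun s => g s ^ 2) MeasureTheory.volume a b :=
    (hgc.pow 2).intervalIntegrable a b
  have hfint : IntervalIntegrable (fun s => f s ^ 2) MeasureTheory.volume a b :=
    (hfc.pow 2).intervalIntegrable a b
  rw [integral_sub (hgint.const_mul μ) (hfint.const_mul α), integral_const_mul,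
    integral_const_mul] at h
  linarith

theorem two_mul_mul_integral_sq_eq (hf0 : f 0 = 0) (hg0 : g 0 = 1) (t : ℝ) :
    2 * α * ∫ s in (0:ℝ)..t, f s ^ 2 = μ ^ 2 - μ * α * f t ^ 2 - (μ * g t + f t) ^ 2 := by
  have henergy := two_mul_integral_sq_deriv_eq hμ hf hg 0 t
  have hcross := mul_integral_sq_eq hμ hf hg 0 t
  rw [hf0, hg0] at henergy hcross
  linear_combination 2 * hcross + μ * henergy

end DampedOscillator

/-- Uniform-in-`μ` bound on the mode kernels: there is a universal constant `c > 0`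
(independent of `μ`, `α`, `t`) such that `∫₀ᵗ f(s)² ds ≤ c μ²/α` for the solution with
`f(0) = 0`, `g(0) = 1`. -/
theorem stmt_3 :
    ∃ c > (0:ℝ), ∀ (μ α : ℝ), 0 < μ → 0 < α → ∀ f g : ℝ → ℝ,
      (∀ t, HasDerivAt f (g t) t) →
      (∀ t, HasDerivAt g ((-α * f t - g t) / μ) t) →
      f 0 = 0 → g 0 = 1 →
      ∀ t, 0 ≤ t → (∫ s in (0:ℝ)..t, f s ^ 2) ≤ c * μ ^ 2 / α := by
  refine ⟨1 / 2, one_half_pos, fun μ α hμ hα f g hf hg hf0 hg0 t _ => ?_⟩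
  have hid := two_mul_mul_integral_sq_eq hμ.ne' hf hg hf0 hg0 t
  have hdissipated : 0 ≤ μ * α * f t ^ 2 := by positivity
  rw [le_div_iff₀ hα]
  nlinarith [sq_nonneg (μ * g t + f t)]
end

section
/- Let μ > 0, α > 0, θ ∈ [0,1], and let f solve f'(t)=g(t), μ g'(t) = -α f(t) - g(t) with f(0)=0, g(0)=1. Then there exists a constant c > 0 independent of μ, α, θ such that for all 0 ≤ s < t, ∫₀ˢ |f(t-r) - f(s-r)|² dr ≤ c·(μ²/α^{1-θ})·(t-s)^θ. -/
/-!
The increment `F r = f (r + h) - f r` solves the same linear equation, and for any solution the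
Lyapunov function `H = (μ g + f)² + μ α f²` satisfies `H' = -2 α f²`, so `2 α ∫₀ˢ F² ≤ H_F(0)`.
For the solution started at `(0, 1)`, `H` and the energy `μ g² + α f²` decay from `μ²` and `μ`,
giving `|g| ≤ 1`, `|μ g + f| ≤ μ` and `|f| ≤ 2μ` on `[0, ∞)`. Hence `H_F(0) ≤ 4 μ²` in general
(parallelogram law), and `H_F(0) ≤ 6 μ² α h` when `α h ≤ 1` (mean value inequality for `f` and
`μ g + f`). So `∫₀ˢ F² ≤ 3 μ² min(h, 1/α) ≤ 3 μ² h^θ α^(θ-1)`.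
-/

open Set

theorem abs_sub_le_mul_of_hasDerivAt {φ φ' : ℝ → ℝ} {C a b : ℝ}
    (hφ : ∀ x, HasDerivAt φ (φ' x) x) (bound : ∀ x ∈ Ico a b, |φ' x| ≤ C) (hab : a ≤ b) :
    |φ b - φ a| ≤ C * (b - a) :=
  norm_image_sub_le_of_norm_deriv_le_segment' (fun x _ => (hφ x).hasDerivWithinAt) bound b
    ⟨hab, le_rfl⟩

theorem Real.min_le_rpow_mul_rpow {a b θ : ℝ} (ha : 0 ≤ a) (hb : 0 ≤ b) (hθ₀ : 0 ≤ θ)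
    (hθ₁ : θ ≤ 1) : min a b ≤ a ^ θ * b ^ (1 - θ) := by
  have hm : 0 ≤ min a b := le_min ha hb
  calc min a b = min a b ^ θ * min a b ^ (1 - θ) := by
        rw [← Real.rpow_add' hm (by norm_num), add_sub_cancel, Real.rpow_one]
    _ ≤ a ^ θ * b ^ (1 - θ) :=
        mul_le_mul (Real.rpow_le_rpow hm (min_le_left a b) hθ₀)
          (Real.rpow_le_rpow hm (min_le_right a b) (sub_nonneg.2 hθ₁)) (by positivity)
          (by positivity)

namespace DampedMode

def lyapunov (μ α x y : ℝ) : ℝ := (μ * y + x) ^ 2 + μ * α * x ^ 2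

def energy (μ α x y : ℝ) : ℝ := μ * y ^ 2 + α * x ^ 2

theorem lyapunov_nonneg {μ α : ℝ} (h : 0 ≤ μ * α) (x y : ℝ) : 0 ≤ lyapunov μ α x y := by
  unfold lyapunov; positivity

theorem lyapunov_sub_le {μ α : ℝ} (h : 0 ≤ μ * α) (x y x' y' : ℝ) :
    lyapunov μ α (x - x') (y - y') ≤ 2 * lyapunov μ α x y + 2 * lyapunov μ α x' y' := by
  unfold lyapunov
  nlinarith [sq_nonneg (μ * y + x + (μ * y' + x')), mul_nonneg h (sq_nonneg (x + x'))]

structure IsSolution (μ α : ℝ) (f g : ℝ → ℝ) : Prop where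
  hasDerivAt_fst : ∀ t, HasDerivAt f (g t) t
  hasDerivAt_snd : ∀ t, HasDerivAt g ((-α * f t - g t) / μ) t

namespace IsSolution

variable {μ α : ℝ} {f g : ℝ → ℝ}

theorem comp_add_const (hs : IsSolution μ α f g) (h : ℝ) :
    IsSolution μ α (fun u => f (u + h)) (fun u => g (u + h)) where
  hasDerivAt_fst u := by
    simpa using (hs.hasDerivAt_fst (u + h)).comp_add_const u h
  hasDerivAt_snd u := by
    simpa using (hs.hasDerivAt_snd (u + h)).comp_add_const u h

theorem sub {f' g' : ℝ → ℝ} (hs : IsSolution μ α f g) (hs' : IsSolution μ α f' g') :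
    IsSolution μ α (fun u => f u - f' u) (fun u => g u - g' u) where
  hasDerivAt_fst u := (hs.hasDerivAt_fst u).sub (hs'.hasDerivAt_fst u)
  hasDerivAt_snd u := ((hs.hasDerivAt_snd u).sub (hs'.hasDerivAt_snd u)).congr_deriv (by ring)

theorem continuous_fst (hs : IsSolution μ α f g) : Continuous f :=
  continuous_iff_continuousAt.2 fun u => (hs.hasDerivAt_fst u).continuousAt

theorem hasDerivAt_momentum (hs : IsSolution μ α f g) (hμ : μ ≠ 0) (u : ℝ) :
    HasDerivAt (fun v => μ * g v + f v) (-(α * f u)) u :=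
  (((hs.hasDerivAt_snd u).const_mul μ).add (hs.hasDerivAt_fst u)).congr_deriv (by
    field_simp; ring)

theorem hasDerivAt_lyapunov (hs : IsSolution μ α f g) (hμ : μ ≠ 0) (u : ℝ) :
    HasDerivAt (fun v => lyapunov μ α (f v) (g v)) (-(2 * α * f u ^ 2)) u :=
  (((hs.hasDerivAt_momentum hμ u).pow 2).add
    (((hs.hasDerivAt_fst u).pow 2).const_mul (μ * α))).congr_deriv (by push_cast; ring)

theorem hasDerivAt_energy (hs : IsSolution μ α f g) (hμ : μ ≠ 0) (u : ℝ) :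
    HasDerivAt (fun v => energy μ α (f v) (g v)) (-(2 * g u ^ 2)) u :=
  ((((hs.hasDerivAt_snd u).pow 2).const_mul μ).add
    (((hs.hasDerivAt_fst u).pow 2).const_mul α)).congr_deriv (by push_cast; field_simp; ring)

theorem antitone_lyapunov (hs : IsSolution μ α f g) (hμ : μ ≠ 0) (hα : 0 ≤ α) :
    Antitone fun v => lyapunov μ α (f v) (g v) :=
  antitone_of_hasDerivAt_nonpos (hs.hasDerivAt_lyapunov hμ) fun u => by
    have := sq_nonneg (f u); simp only [Pi.zero_apply]; nlinarith

theorem antitone_energy (hs : IsSolution μ α f g) (hμ : μ ≠ 0) :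
    Antitone fun v => energy μ α (f v) (g v) :=
  antitone_of_hasDerivAt_nonpos (hs.hasDerivAt_energy hμ) fun u => by
    have := sq_nonneg (g u); simp only [Pi.zero_apply]; linarith

theorem two_mul_integral_sq_le (hs : IsSolution μ α f g) (hμ : 0 < μ) (hα : 0 ≤ α) (a b : ℝ) :
    2 * α * ∫ r in a..b, f r ^ 2 ≤ lyapunov μ α (f a) (g a) := by
  have hftc : ∫ r in a..b, -(2 * α * f r ^ 2) =
      lyapunov μ α (f b) (g b) - lyapunov μ α (f a) (g a) :=
    intervalIntegral.integral_eq_sub_of_hasDerivAt (fun u _ => hs.hasDerivAt_lyapunov hμ.ne' u)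
      ((continuous_const.mul (hs.continuous_fst.pow 2)).neg.intervalIntegrable a b)
  rw [intervalIntegral.integral_neg, intervalIntegral.integral_const_mul] at hftc
  linarith [lyapunov_nonneg (mul_nonneg hμ.le hα) (f b) (g b)]

section Normalized

variable (hs : IsSolution μ α f g) (hμ : 0 < μ) (hf0 : f 0 = 0) (hg0 : g 0 = 1)
include hs hμ hf0 hg0

theorem lyapunov_le_sq (hα : 0 ≤ α) {u : ℝ} (hu : 0 ≤ u) :
    lyapunov μ α (f u) (g u) ≤ μ ^ 2 := by
  simpa [lyapunov, hf0, hg0] using hs.antitone_lyapunov hμ.ne' hα hu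

theorem abs_snd_le_one (hα : 0 ≤ α) {u : ℝ} (hu : 0 ≤ u) : |g u| ≤ 1 := by
  have hE := hs.antitone_energy hμ.ne' hu
  simp only [energy, hf0, hg0] at hE
  refine abs_le_of_sq_le_sq ?_ zero_le_one
  nlinarith [mul_nonneg hα (sq_nonneg (f u))]

theorem abs_momentum_le (hα : 0 ≤ α) {u : ℝ} (hu : 0 ≤ u) : |μ * g u + f u| ≤ μ := by
  have hH := lyapunov_le_sq hs hμ hf0 hg0 hα hu
  unfold lyapunov at hH
  exact abs_le_of_sq_le_sq (by nlinarith [mul_nonneg (mul_nonneg hμ.le hα) (sq_nonneg (f u))]) hμ.le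

theorem abs_fst_le (hα : 0 ≤ α) {u : ℝ} (hu : 0 ≤ u) : |f u| ≤ 2 * μ := by
  have hp := abs_momentum_le hs hμ hf0 hg0 hα hu
  have hg := abs_snd_le_one hs hμ hf0 hg0 hα hu
  calc |f u| = |(μ * g u + f u) - μ * g u| := by ring_nf
    _ ≤ |μ * g u + f u| + |μ * g u| := abs_sub _ _
    _ = |μ * g u + f u| + μ * |g u| := by rw [abs_mul, abs_of_pos hμ]
    _ ≤ 2 * μ := by nlinarith

theorem abs_fst_le_self (hα : 0 ≤ α) {h : ℝ} (hh : 0 ≤ h) : |f h| ≤ h := by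
  simpa [hf0] using abs_sub_le_mul_of_hasDerivAt hs.hasDerivAt_fst
    (fun x hx => abs_snd_le_one hs hμ hf0 hg0 hα hx.1) hh

theorem abs_momentum_sub_le (hα : 0 ≤ α) {h : ℝ} (hh : 0 ≤ h) :
    |μ * g h + f h - μ| ≤ 2 * μ * α * h := by
  have hbound : ∀ x ∈ Ico 0 h, |-(α * f x)| ≤ 2 * μ * α := fun x hx => by
    rw [abs_neg, abs_mul, abs_of_nonneg hα]
    nlinarith [abs_fst_le hs hμ hf0 hg0 hα hx.1]
  simpa [hf0, hg0] using abs_sub_le_mul_of_hasDerivAt (hs.hasDerivAt_momentum hμ.ne') hbound hh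

theorem lyapunov_increment_le (hα : 0 < α) {h : ℝ} (hh : 0 ≤ h) :
    lyapunov μ α (f h - f 0) (g h - g 0) ≤ 6 * μ ^ 2 * α * min h α⁻¹ := by
  rcases le_total (α * h) 1 with hsmall | hlarge
  · rw [min_eq_left (by rw [← one_div, le_div_iff₀ hα]; linarith)]
    have hp := abs_momentum_sub_le hs hμ hf0 hg0 hα.le hh
    have hp2 : (μ * g h + f h - μ) ^ 2 ≤ (2 * μ * α * h) ^ 2 := by
      rw [← sq_abs]; exact pow_le_pow_left₀ (abs_nonneg _) hp 2
    have hf2 : f h ^ 2 ≤ h * (2 * μ) := by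
      rw [← sq_abs, sq]
      exact mul_le_mul (abs_fst_le_self hs hμ hf0 hg0 hα.le hh)
        (abs_fst_le hs hμ hf0 hg0 hα.le hh) (abs_nonneg _) hh
    have hlin : 0 ≤ μ ^ 2 * α * h * (1 - α * h) :=
      mul_nonneg (by positivity) (sub_nonneg.2 hsmall)
    calc lyapunov μ α (f h - f 0) (g h - g 0)
        = (μ * g h + f h - μ) ^ 2 + μ * α * f h ^ 2 := by simp only [lyapunov, hf0, hg0]; ring
      _ ≤ (2 * μ * α * h) ^ 2 + μ * α * (h * (2 * μ)) := by gcongr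
      _ ≤ 6 * μ ^ 2 * α * h := by nlinarith
  · rw [min_eq_right (by rw [← one_div, div_le_iff₀ hα]; linarith),
      mul_inv_cancel_right₀ hα.ne']
    have hμα : 0 ≤ μ * α := mul_nonneg hμ.le hα.le
    linarith [lyapunov_sub_le hμα (f h) (g h) (f 0) (g 0),
      lyapunov_le_sq hs hμ hf0 hg0 hα.le hh, lyapunov_le_sq hs hμ hf0 hg0 hα.le le_rfl,
      sq_nonneg μ]

theorem integral_sq_increment_le (hα : 0 < α) {h : ℝ} (hh : 0 ≤ h) (s : ℝ) :
    ∫ r in (0:ℝ)..s, (f (r + h) - f r) ^ 2 ≤ 3 * μ ^ 2 * min h α⁻¹ := by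
  have hint := ((hs.comp_add_const h).sub hs).two_mul_integral_sq_le hμ hα.le 0 s
  simp only [zero_add] at hint
  have hinc := lyapunov_increment_le hs hμ hf0 hg0 hα hh
  refine le_of_mul_le_mul_left ?_ (by positivity : (0:ℝ) < 2 * α)
  linarith

end Normalized

end IsSolution

end DampedMode

/-- Uniform time-increment bound for the mode kernels: for every `θ ∈ [0,1]`,
`∫₀ˢ |f(t-r) - f(s-r)|² dr ≤ c · (μ²/α^{1-θ}) · (t-s)^θ` with a universal `c`. -/
theorem stmt_4 :
    ∃ c > (0:ℝ), ∀ (μ α θ : ℝ), 0 < μ → 0 < α → θ ∈ Set.Icc (0:ℝ) 1 →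
      ∀ f g : ℝ → ℝ,
      (∀ t, HasDerivAt f (g t) t) →
      (∀ t, HasDerivAt g ((-α * f t - g t) / μ) t) →
      f 0 = 0 → g 0 = 1 →
      ∀ s t : ℝ, 0 ≤ s → s < t →
        (∫ r in (0:ℝ)..s, (f (t - r) - f (s - r)) ^ 2)
          ≤ c * (μ ^ 2 / α ^ (1 - θ)) * (t - s) ^ θ := by
  refine ⟨3, by norm_num, fun μ α θ hμ hα ⟨hθ₀, hθ₁⟩ f g hf hg hf0 hg0 s t _ hst => ?_⟩
  have hsol : DampedMode.IsSolution μ α f g := ⟨hf, hg⟩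
  have hh : 0 ≤ t - s := sub_nonneg.2 hst.le
  calc ∫ r in (0:ℝ)..s, (f (t - r) - f (s - r)) ^ 2
      = ∫ r in (0:ℝ)..s, (f (r + (t - s)) - f r) ^ 2 := by
        simpa using intervalIntegral.integral_comp_sub_left
          (fun r => (f (r + (t - s)) - f r) ^ 2) s (a := 0) (b := s)
    _ ≤ 3 * μ ^ 2 * min (t - s) α⁻¹ := hsol.integral_sq_increment_le hμ hf0 hg0 hα hh s
    _ ≤ 3 * μ ^ 2 * ((t - s) ^ θ * α⁻¹ ^ (1 - θ)) := by
        gcongr; exact Real.min_le_rpow_mul_rpow hh (inv_nonneg.2 hα.le) hθ₀ hθ₁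
    _ = 3 * (μ ^ 2 / α ^ (1 - θ)) * (t - s) ^ θ := by rw [Real.inv_rpow hα.le]; ring
end

section
/- Let H be a separable Hilbert space with orthonormal basis (e_k) and A e_k = -α_k e_k, 0 < α_1 ≤ α_k ↑. For ε > 0 define A_ε = J_ε^{-1} ⊗ A on H ⊕ H (i.e., acting as the 2×2 matrix J_ε^{-1} = (1/(1+ε²))·[[ε, -1],[1, ε]] composed with the Laplacian in each mode). Then the semigroup T_ε(t) generated by A_ε satisfies ‖T_ε(t)‖ ≤ exp(-ε·α_1·t/(1+ε²)) for all t ≥ 0. -/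
open Matrix

attribute [local instance] Matrix.linftyOpNormedAddCommGroup Matrix.linftyOpNormedRing
  Matrix.linftyOpNormedSpace Matrix.linftyOpNormedAlgebra

/-!
The regular representation `z ↦ !![z.re, -z.im; z.im, z.re]` of `ℂ` over the basis `1, i` is a
continuous `ℝ`-algebra embedding into `2 × 2` real matrices which sends `ε - i` to
`!![ε, 1; -1, ε]`. Hence the generator on the `k`-th mode is the image of the complex number
`c = -α_k t (ε - i)⁻¹`, with `Re c = -α_k t ε / (1 + ε²)`, and its exponential is the image of
`exp c`. The image of `w` acts on `ℝ²` as multiplication by `w`, scaling the Euclidean norm by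
`‖w‖`, and `‖exp c‖ = exp (Re c)`, which is largest for `k = 0` since `α` is monotone.
-/

open Complex

theorem Matrix.map_inv_of_field {K R n F : Type*} [Field K] [CommRing R] [Fintype n]
    [DecidableEq n] [FunLike F K (Matrix n n R)] [RingHomClass F K (Matrix n n R)] (f : F)
    (z : K) : f z⁻¹ = (f z)⁻¹ := by
  rcases eq_or_ne z 0 with rfl | hz
  · simp
  · exact (Matrix.inv_eq_right_inv (by rw [← map_mul, mul_inv_cancel₀ hz, map_one])).symm

namespace Algebra

theorem leftMulMatrix_complex_ofReal_sub_I (ε : ℝ) :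
    leftMulMatrix basisOneI ((ε : ℂ) - I) = !![ε, 1; -1, ε] := by
  simp [leftMulMatrix_complex]

theorem leftMulMatrix_complex_mulVec_sq (w : ℂ) (x : Fin 2 → ℝ) :
    (leftMulMatrix basisOneI w *ᵥ x) 0 ^ 2 + (leftMulMatrix basisOneI w *ᵥ x) 1 ^ 2
      = normSq w * (x 0 ^ 2 + x 1 ^ 2) := by
  simp only [leftMulMatrix_complex, normSq_apply, mulVec, dotProduct, Fin.sum_univ_two,
    of_apply, cons_val', cons_val_zero, cons_val_one, empty_val', cons_val_fin_one]
  ring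

theorem exp_leftMulMatrix_complex (z : ℂ) :
    NormedSpace.exp (leftMulMatrix basisOneI z) = leftMulMatrix basisOneI (exp z) := by
  rw [exp_eq_exp_ℂ]
  exact (NormedSpace.map_exp (leftMulMatrix basisOneI)
    (leftMulMatrix basisOneI).toLinearMap.continuous_of_finiteDimensional z).symm

end Algebra

namespace Complex

theorem normSq_exp (z : ℂ) : normSq (exp z) = Real.exp z.re ^ 2 := by
  rw [normSq_eq_norm_sq, norm_exp]

theorem re_smul_inv_ofReal_sub_I (r ε : ℝ) :
    (r • ((ε : ℂ) - I)⁻¹).re = r * ε / (1 + ε ^ 2) := by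
  simp [normSq_apply]
  ring

end Complex

theorem stmt_10_general (ε : ℝ) (hε : 0 < ε) (α : ℕ → ℝ) (hmono : Monotone α) :
    ∀ (k : ℕ) (t : ℝ), 0 ≤ t → ∀ x : Fin 2 → ℝ,
      (((NormedSpace.exp
          (t • ((-(α k)) • (!![ε, 1; -1, ε] : Matrix (Fin 2) (Fin 2) ℝ)⁻¹))).mulVec x 0) ^ 2
        + ((NormedSpace.exp
          (t • ((-(α k)) • (!![ε, 1; -1, ε] : Matrix (Fin 2) (Fin 2) ℝ)⁻¹))).mulVec x 1) ^ 2)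
      ≤ (Real.exp (-(ε * α 0 * t) / (1 + ε ^ 2))) ^ 2 * ((x 0) ^ 2 + (x 1) ^ 2) := by
  intro k t ht x
  have hgenerator : t • ((-(α k)) • (!![ε, 1; -1, ε] : Matrix (Fin 2) (Fin 2) ℝ)⁻¹)
      = Algebra.leftMulMatrix basisOneI ((t * -α k) • ((ε : ℂ) - I)⁻¹) := by
    rw [← Algebra.leftMulMatrix_complex_ofReal_sub_I, ← Matrix.map_inv_of_field, smul_smul,
      map_smul]
  have hdecay : t * -α k * ε ≤ -(ε * α 0 * t) := by
    nlinarith [mul_le_mul_of_nonneg_left (hmono (Nat.zero_le k)) (mul_nonneg hε.le ht)]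
  rw [hgenerator, Algebra.exp_leftMulMatrix_complex, Algebra.leftMulMatrix_complex_mulVec_sq,
    normSq_exp, re_smul_inv_ofReal_sub_I]
  gcongr

/-- Decay of the semigroup `T_ε(t)` generated by `A_ε = J_ε⁻¹ A`: on the `k`-th eigenmode
(a two-dimensional fiber where `T_ε(t)` acts as `exp(t·(-α_k)·J_ε⁻¹)`), the Euclidean norm
satisfies `‖T_ε(t)x‖ ≤ exp(-ε α_1 t/(1+ε²))·‖x‖`; hence `‖T_ε(t)‖ ≤ exp(-ε α_1 t/(1+ε²))`. -/
theorem stmt_10 (ε : ℝ) (hε : 0 < ε) (α : ℕ → ℝ) (hα : 0 < α 0) (hmono : Monotone α) :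
    ∀ (k : ℕ) (t : ℝ), 0 ≤ t → ∀ x : Fin 2 → ℝ,
      (((NormedSpace.exp
          (t • ((-(α k)) • (!![ε, 1; -1, ε] : Matrix (Fin 2) (Fin 2) ℝ)⁻¹))).mulVec x 0) ^ 2
        + ((NormedSpace.exp
          (t • ((-(α k)) • (!![ε, 1; -1, ε] : Matrix (Fin 2) (Fin 2) ℝ)⁻¹))).mulVec x 1) ^ 2)
      ≤ (Real.exp (-(ε * α 0 * t) / (1 + ε ^ 2))) ^ 2 * ((x 0) ^ 2 + (x 1) ^ 2) :=
  stmt_10_general ε hε α hmono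
end

section
/- Let H be a Hilbert space, Q : H → H injective self-adjoint nonnegative, A self-adjoint negative with A e_k = -α_k e_k, and F : H → ℝ Fréchet differentiable with Lipschitz derivative, F(0)=0, F ≥ 0. For φ : (-∞,0] → H absolutely continuous with φ(0) = u ∈ Dom((-A)^{1/2}Q^{-1}), dφ/dt(0) = v ∈ Dom(Q^{-1}), and with |(-A)^{1/2}Q^{-1}φ(t)| + |Q^{-1}dφ/dt(t)| → 0 as t → -∞, one has the identity 2∫_{-∞}^0 ⟨Q^{-1}dφ/dt(t), Q^{-1}(μ d²φ/dt²(t) - Aφ(t)) + Q DF(φ(t))⟩ dt = |(-A)^{1/2}Q^{-1}u|² + 2F(u) + μ|Q^{-1}v|². -/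
open scoped RealInnerProductSpace Topology
open MeasureTheory Filter

/-!
The quasi-potential `V(φ, φ')` is an energy for the damped wave flow: by the chain rule and the
relations `⟪Q⁻¹x, Q⁻¹Ay⟫ = -⟪Rx, Ry⟫`, `⟪Q⁻¹x, Qy⟫ = ⟪x, y⟫`, its time derivative along `φ` is
exactly twice the integrand. The decay at `-∞` (together with the coercivity of `R`, which forces
`φ → 0`, and `F(0) = 0`) makes `V(φ, φ') → 0` there, so the fundamental theorem of calculus on
`(-∞, 0]` gives the identity.
-/

section QuasiPotential

variable {H E K : Type*} [NormedAddCommGroup H] [InnerProductSpace ℝ H]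
  [NormedAddCommGroup E] [InnerProductSpace ℝ E] [NormedAddCommGroup K] [InnerProductSpace ℝ K]

/-- The paper's `V^μ(x, y) = |(-A)^{1/2}Q⁻¹x|² + 2F(x) + μ|Q⁻¹y|²`, with `R = (-A)^{1/2}Q⁻¹`. -/
def quasiPotential (R : H →L[ℝ] E) (Qinv : H →L[ℝ] K) (F : H → ℝ) (μ : ℝ) (x y : H) : ℝ :=
  ‖R x‖ ^ 2 + 2 * F x + μ * ‖Qinv y‖ ^ 2

theorem hasDerivAt_quasiPotential [CompleteSpace H] (R : H →L[ℝ] E) (Qinv : H →L[ℝ] K)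
    {F : H → ℝ} (μ : ℝ)
    {φ ψ : ℝ → H} {φ' ψ' g : H} {t : ℝ} (hφ : HasDerivAt φ φ' t) (hψ : HasDerivAt ψ ψ' t)
    (hF : HasGradientAt F g (φ t)) :
    HasDerivAt (fun s => quasiPotential R Qinv F μ (φ s) (ψ s))
      (2 * (⟪R φ', R (φ t)⟫ + ⟪g, φ'⟫ + μ * ⟪Qinv (ψ t), Qinv ψ'⟫)) t := by
  have hRφ : HasDerivAt (fun s => ‖R (φ s)‖ ^ 2) (2 * ⟪R (φ t), R φ'⟫) t :=
    (R.hasFDerivAt.comp_hasDerivAt t hφ).norm_sq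
  have hQψ : HasDerivAt (fun s => ‖Qinv (ψ s)‖ ^ 2) (2 * ⟪Qinv (ψ t), Qinv ψ'⟫) t :=
    (Qinv.hasFDerivAt.comp_hasDerivAt t hψ).norm_sq
  have hFφ : HasDerivAt (fun s => F (φ s)) ⟪g, φ'⟫ t := by
    have h := hF.hasFDerivAt.comp_hasDerivAt t hφ
    simp only [InnerProductSpace.toDual_apply_apply] at h
    exact h
  refine ((hRφ.add (hFφ.const_mul 2)).add (hQψ.const_mul μ)).congr_deriv ?_
  rw [real_inner_comm (R φ')]
  ring

theorem inner_dampedWave_eq {μ : ℝ} {Qinv : H →L[ℝ] K} {R : H →L[ℝ] E} {A' : H →L[ℝ] H}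
    {Q : H →L[ℝ] K} (hQA : ∀ x y : H, ⟪Qinv x, Qinv (A' y)⟫ = -⟪R x, R y⟫)
    (hQ : ∀ x y : H, ⟪Qinv x, Q y⟫ = ⟪x, y⟫) (x y z w : H) :
    ⟪Qinv y, Qinv (μ • z - A' x) + Q w⟫ = ⟪R y, R x⟫ + ⟪w, y⟫ + μ * ⟪Qinv y, Qinv z⟫ := by
  rw [inner_add_right, map_sub, map_smul, inner_sub_right, inner_smul_right, hQA, hQ,
    real_inner_comm w]
  ring

theorem tendsto_quasiPotential_zero {ι : Type*} {l : Filter ι} {R : H →L[ℝ] E}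
    {Qinv : H →L[ℝ] K} {F : H → ℝ} (μ : ℝ) {C : ℝ} (hcoer : ∀ x : H, ‖x‖ ≤ C * ‖R x‖)
    (hF : ContinuousAt F 0) (hF0 : F 0 = 0) {φ ψ : ι → H}
    (hdecay : Tendsto (fun i => ‖R (φ i)‖ + ‖Qinv (ψ i)‖) l (𝓝 0)) :
    Tendsto (fun i => quasiPotential R Qinv F μ (φ i) (ψ i)) l (𝓝 0) := by
  have hR : Tendsto (fun i => ‖R (φ i)‖) l (𝓝 0) :=
    squeeze_zero (fun _ => norm_nonneg _) (fun _ => le_add_of_nonneg_right (norm_nonneg _))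
      hdecay
  have hQ : Tendsto (fun i => ‖Qinv (ψ i)‖) l (𝓝 0) :=
    squeeze_zero (fun _ => norm_nonneg _) (fun _ => le_add_of_nonneg_left (norm_nonneg _))
      hdecay
  have hφ : Tendsto φ l (𝓝 0) := by
    rw [tendsto_zero_iff_norm_tendsto_zero]
    exact squeeze_zero (fun _ => norm_nonneg _) (fun i => hcoer (φ i))
      (by simpa using hR.const_mul C)
  have hFφ : Tendsto (fun i => F (φ i)) l (𝓝 0) := hF0 ▸ hF.tendsto.comp hφ
  simpa [quasiPotential] using ((hR.pow 2).add (hFφ.const_mul 2)).add ((hQ.pow 2).const_mul μ)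

end QuasiPotential

theorem stmt_13_general {H : Type*} [NormedAddCommGroup H] [InnerProductSpace ℝ H] [CompleteSpace H]
    (μ : ℝ)
    (Qinv R A' Q : H →L[ℝ] H)
    (hQA : ∀ x y : H, ⟪Qinv x, Qinv (A' y)⟫ = -⟪R x, R y⟫)
    (hQ : ∀ x y : H, ⟪Qinv x, Q y⟫ = ⟪x, y⟫)
    (C : ℝ) (hcoer : ∀ x : H, ‖x‖ ≤ C * ‖R x‖)
    (F : H → ℝ) (DF : H → H) (hF : ∀ x, HasGradientAt F (DF x) x)
    (L : NNReal) (hF0 : F 0 = 0)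
    (u v : H) (φ dφ ddφ : ℝ → H)
    (hφ : ∀ t, HasDerivAt φ (dφ t) t) (hdφ : ∀ t, HasDerivAt dφ (ddφ t) t)
    (hu : φ 0 = u) (hv : dφ 0 = v)
    (hdecay : Filter.Tendsto (fun t => ‖R (φ t)‖ + ‖Qinv (dφ t)‖) Filter.atBot (nhds 0))
    (hint : IntegrableOn
      (fun t => ⟪Qinv (dφ t), Qinv (μ • ddφ t - A' (φ t)) + Q (DF (φ t))⟫) (Set.Iic 0)) :
    2 * ∫ t in Set.Iic (0:ℝ), ⟪Qinv (dφ t), Qinv (μ • ddφ t - A' (φ t)) + Q (DF (φ t))⟫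
      = ‖R u‖ ^ 2 + 2 * F u + μ * ‖Qinv v‖ ^ 2 := by
  have hderiv : ∀ t, HasDerivAt (fun s => quasiPotential R Qinv F μ (φ s) (dφ s))
      (2 * ⟪Qinv (dφ t), Qinv (μ • ddφ t - A' (φ t)) + Q (DF (φ t))⟫) t := fun t => by
    rw [inner_dampedWave_eq hQA hQ]
    exact hasDerivAt_quasiPotential R Qinv μ (hφ t) (hdφ t) (hF (φ t))
  have hlim := tendsto_quasiPotential_zero μ hcoer
    (hF 0).hasFDerivAt.differentiableAt.continuousAt hF0 hdecay
  rw [← integral_const_mul, integral_Iic_of_hasDerivAt_of_tendsto' (fun t _ => hderiv t)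
    (hint.const_mul 2) hlim, sub_zero, quasiPotential, hu, hv]

/-- Completion-of-the-square identity for the quasi-potential of the gradient damped wave
equation.  Here `Qinv`, `R = (-A)^{1/2}Q⁻¹`, `A'`, `Q` are the relevant operators (with
their structural relations encoded in `hQA`, `hQ`, `hcoer`), `DF` is the Fréchet gradient
of `F`, and `φ` is a trajectory with `φ(0) = u`, `φ'(0) = v` and
`|Rφ(t)| + |Q⁻¹φ'(t)| → 0` as `t → -∞`.  Then
`2∫_{-∞}^0 ⟨Q⁻¹φ', Q⁻¹(μφ'' - Aφ) + Q DF(φ)⟩ dt = |(-A)^{1/2}Q⁻¹u|² + 2F(u) + μ|Q⁻¹v|²`. -/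
theorem stmt_13 {H : Type*} [NormedAddCommGroup H] [InnerProductSpace ℝ H] [CompleteSpace H]
    (μ : ℝ) (hμ : 0 < μ)
    (Qinv R A' Q : H →L[ℝ] H)
    (hQA : ∀ x y : H, ⟪Qinv x, Qinv (A' y)⟫ = -⟪R x, R y⟫)
    (hQ : ∀ x y : H, ⟪Qinv x, Q y⟫ = ⟪x, y⟫)
    (C : ℝ) (hC : 0 < C) (hcoer : ∀ x : H, ‖x‖ ≤ C * ‖R x‖)
    (F : H → ℝ) (DF : H → H) (hF : ∀ x, HasGradientAt F (DF x) x)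
    (L : NNReal) (hL : LipschitzWith L DF) (hF0 : F 0 = 0) (hFpos : ∀ x, 0 ≤ F x)
    (u v : H) (φ dφ ddφ : ℝ → H)
    (hφ : ∀ t, HasDerivAt φ (dφ t) t) (hdφ : ∀ t, HasDerivAt dφ (ddφ t) t)
    (hu : φ 0 = u) (hv : dφ 0 = v)
    (hdecay : Filter.Tendsto (fun t => ‖R (φ t)‖ + ‖Qinv (dφ t)‖) Filter.atBot (nhds 0))
    (hint : IntegrableOn
      (fun t => ⟪Qinv (dφ t), Qinv (μ • ddφ t - A' (φ t)) + Q (DF (φ t))⟫) (Set.Iic 0)) :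
    2 * ∫ t in Set.Iic (0:ℝ), ⟪Qinv (dφ t), Qinv (μ • ddφ t - A' (φ t)) + Q (DF (φ t))⟫
      = ‖R u‖ ^ 2 + 2 * F u + μ * ‖Qinv v‖ ^ 2 :=
  stmt_13_general μ Qinv R A' Q hQA hQ C hcoer F DF hF L hF0 u v φ dφ ddφ hφ hdφ hu hv hdecay hint
end
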